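/- arXiv:2512.09219 — 3 statements merged into one kernel-verified Lean document; each statement's English description precedes it below -/
import Mathlib

section
/- Let (X,d) be a metric space and let η₁ : [0,T₁] → X and η₂ : [0,T₂] → X be unit-speed geodesics. Then, after possibly replacing η₂ by its time reversal t ↦ η₂(T₂ − t), the following three inequalities hold, where r denotes the Hausdorff distance between the images η₁([0,T₁]) and η₂([0,T₂]): |T₁ − T₂| ≤ 2r, d(η₁(0), η₂(0)) ≤ 5r, and d(η₁(T₁), η₂(T₂)) ≤ 5r. -/
open Set Metric

/-- Two unit-speed geodesics in a metric space; after possibly reversing the second one,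
the lengths differ by at most twice the Hausdorff distance between their images, and the
corresponding endpoints are within five times that Hausdorff distance. -/
theorem endpoints_close_of_hausdorff_close {X : Type*} [MetricSpace X]
    (T₁ T₂ : ℝ) (hT₁ : 0 ≤ T₁) (hT₂ : 0 ≤ T₂) (η₁ η₂ : ℝ → X)
    (h₁ : ∀ s ∈ Icc (0:ℝ) T₁, ∀ t ∈ Icc (0:ℝ) T₁, dist (η₁ s) (η₁ t) = |s - t|)
    (h₂ : ∀ s ∈ Icc (0:ℝ) T₂, ∀ t ∈ Icc (0:ℝ) T₂, dist (η₂ s) (η₂ t) = |s - t|) :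
    ∃ η₂' : ℝ → X, (η₂' = η₂ ∨ η₂' = fun t => η₂ (T₂ - t)) ∧
      |T₁ - T₂| ≤ 2 * hausdorffDist (η₁ '' Icc 0 T₁) (η₂ '' Icc 0 T₂) ∧
      dist (η₁ 0) (η₂' 0) ≤ 5 * hausdorffDist (η₁ '' Icc 0 T₁) (η₂ '' Icc 0 T₂) ∧
      dist (η₁ T₁) (η₂' T₂) ≤ 5 * hausdorffDist (η₁ '' Icc 0 T₁) (η₂ '' Icc 0 T₂) := by
  set S₁ := η₁ '' Icc 0 T₁ with hS₁
  set S₂ := η₂ '' Icc 0 T₂ with hS₂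
  set r := hausdorffDist S₁ S₂ with hr
  have h0₁ : (0:ℝ) ∈ Icc (0:ℝ) T₁ := ⟨le_refl _, hT₁⟩
  have hT₁m : T₁ ∈ Icc (0:ℝ) T₁ := ⟨hT₁, le_refl _⟩
  have h0₂ : (0:ℝ) ∈ Icc (0:ℝ) T₂ := ⟨le_refl _, hT₂⟩
  have hT₂m : T₂ ∈ Icc (0:ℝ) T₂ := ⟨hT₂, le_refl _⟩
  have hc₁ : ContinuousOn η₁ (Icc 0 T₁) := by
    apply LipschitzOnWith.continuousOn (K := 1)
    apply LipschitzOnWith.of_dist_le_mul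
    intro s hs t ht
    rw [h₁ s hs t ht]
    simp [Real.dist_eq]
  have hc₂ : ContinuousOn η₂ (Icc 0 T₂) := by
    apply LipschitzOnWith.continuousOn (K := 1)
    apply LipschitzOnWith.of_dist_le_mul
    intro s hs t ht
    rw [h₂ s hs t ht]
    simp [Real.dist_eq]
  have hK₁ : IsCompact S₁ := isCompact_Icc.image_of_continuousOn hc₁
  have hK₂ : IsCompact S₂ := isCompact_Icc.image_of_continuousOn hc₂
  have hN₁ : S₁.Nonempty := ⟨η₁ 0, mem_image_of_mem _ h0₁⟩
  have hN₂ : S₂.Nonempty := ⟨η₂ 0, mem_image_of_mem _ h0₂⟩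
  have hne : EMetric.hausdorffEdist S₁ S₂ ≠ ⊤ :=
    hausdorffEdist_ne_top_of_nonempty_of_bounded hN₁ hN₂ hK₁.isBounded hK₂.isBounded
  have hne' : EMetric.hausdorffEdist S₂ S₁ ≠ ⊤ := by
    unfold EMetric.hausdorffEdist at hne ⊢; rwa [Metric.hausdorffEDist_comm]
  have near₂ : ∀ x ∈ S₁, ∃ t ∈ Icc (0:ℝ) T₂, dist x (η₂ t) ≤ r := by
    intro x hx
    obtain ⟨y, hy, hdy⟩ := hK₂.exists_infDist_eq_dist hN₂ x
    obtain ⟨t, ht, rfl⟩ := hy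
    exact ⟨t, ht, hdy ▸ infDist_le_hausdorffDist_of_mem hx hne⟩
  have near₁ : ∀ x ∈ S₂, ∃ t ∈ Icc (0:ℝ) T₁, dist x (η₁ t) ≤ r := by
    intro x hx
    obtain ⟨y, hy, hdy⟩ := hK₁.exists_infDist_eq_dist hN₁ x
    obtain ⟨t, ht, rfl⟩ := hy
    have := infDist_le_hausdorffDist_of_mem hx hne'
    rw [hausdorffDist_comm] at this
    exact ⟨t, ht, hdy ▸ this⟩
  obtain ⟨t₀, ht₀, hd₀⟩ := near₂ (η₁ 0) (mem_image_of_mem _ h0₁)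
  obtain ⟨t₁, ht₁, hd₁⟩ := near₂ (η₁ T₁) (mem_image_of_mem _ hT₁m)
  obtain ⟨s₀, hs₀, he₀⟩ := near₁ (η₂ 0) (mem_image_of_mem _ h0₂)
  obtain ⟨s₁, hs₁, he₁⟩ := near₁ (η₂ T₂) (mem_image_of_mem _ hT₂m)
  -- T₁ ≤ 2r + |t₁ - t₀|, so T₁ ≤ T₂ + 2r
  have key₁ : T₁ ≤ 2 * r + |t₁ - t₀| := by
    have : dist (η₁ 0) (η₁ T₁) = T₁ := by
      rw [h₁ 0 h0₁ T₁ hT₁m]; rw [abs_of_nonpos (by linarith)]; ring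
    have htri : dist (η₁ 0) (η₁ T₁) ≤ dist (η₁ 0) (η₂ t₀) + dist (η₂ t₀) (η₂ t₁) + dist (η₂ t₁) (η₁ T₁) :=
      dist_triangle4 _ _ _ _
    rw [this, h₂ t₀ ht₀ t₁ ht₁, dist_comm (η₂ t₁), abs_sub_comm] at htri
    linarith
  have keyT₁ : T₁ ≤ T₂ + 2 * r := by
    have : |t₁ - t₀| ≤ T₂ := by
      rw [abs_le]; constructor <;> [linarith [ht₀.1, ht₀.2, ht₁.1, ht₁.2]; linarith [ht₀.1, ht₀.2, ht₁.1, ht₁.2]]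
    linarith
  have keyT₂ : T₂ ≤ T₁ + 2 * r := by
    have h2 : dist (η₂ 0) (η₂ T₂) = T₂ := by
      rw [h₂ 0 h0₂ T₂ hT₂m]; rw [abs_of_nonpos (by linarith)]; ring
    have htri : dist (η₂ 0) (η₂ T₂) ≤ dist (η₂ 0) (η₁ s₀) + dist (η₁ s₀) (η₁ s₁) + dist (η₁ s₁) (η₂ T₂) :=
      dist_triangle4 _ _ _ _
    rw [h2, h₁ s₀ hs₀ s₁ hs₁, dist_comm (η₁ s₁) (η₂ T₂)] at htri
    have : |s₀ - s₁| ≤ T₁ := by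
      rw [abs_le]; constructor <;> linarith [hs₀.1, hs₀.2, hs₁.1, hs₁.2]
    linarith
  have habs : |T₁ - T₂| ≤ 2 * r := by
    rw [abs_le]; constructor <;> linarith
  rcases le_or_gt t₀ t₁ with hle | hlt
  · refine ⟨η₂, Or.inl rfl, habs, ?_, ?_⟩
    · have ht₀4 : t₀ ≤ 4 * r := by
        have : T₁ - 2*r ≤ t₁ - t₀ := by
          rw [abs_of_nonneg (by linarith)] at key₁; linarith
        linarith [ht₁.2]
      have : dist (η₁ 0) (η₂ 0) ≤ dist (η₁ 0) (η₂ t₀) + dist (η₂ t₀) (η₂ 0) := dist_triangle _ _ _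
      rw [h₂ t₀ ht₀ 0 h0₂] at this
      rw [abs_of_nonneg (by linarith [ht₀.1])] at this
      linarith [ht₀.1]
    · have ht₁4 : T₂ - t₁ ≤ 4 * r := by
        have : T₁ - 2*r ≤ t₁ - t₀ := by
          rw [abs_of_nonneg (by linarith)] at key₁; linarith
        linarith [ht₀.1]
      have : dist (η₁ T₁) (η₂ T₂) ≤ dist (η₁ T₁) (η₂ t₁) + dist (η₂ t₁) (η₂ T₂) := dist_triangle _ _ _
      rw [h₂ t₁ ht₁ T₂ hT₂m] at this
      rw [abs_of_nonpos (by linarith [ht₁.2])] at this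
      linarith [ht₁.2]
  · refine ⟨fun t => η₂ (T₂ - t), Or.inr rfl, habs, ?_, ?_⟩
    · simp only [sub_zero]
      have ht₀4 : T₂ - t₀ ≤ 4 * r := by
        have : T₁ - 2*r ≤ t₀ - t₁ := by
          rw [abs_of_nonpos (by linarith)] at key₁; linarith
        linarith [ht₁.1]
      have : dist (η₁ 0) (η₂ T₂) ≤ dist (η₁ 0) (η₂ t₀) + dist (η₂ t₀) (η₂ T₂) := dist_triangle _ _ _
      rw [h₂ t₀ ht₀ T₂ hT₂m] at this
      rw [abs_of_nonpos (by linarith [ht₀.2])] at this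
      linarith
    · simp only [sub_self]
      have ht₁4 : t₁ ≤ 4 * r := by
        have : T₁ - 2*r ≤ t₀ - t₁ := by
          rw [abs_of_nonpos (by linarith)] at key₁; linarith
        linarith [ht₀.2]
      have : dist (η₁ T₁) (η₂ 0) ≤ dist (η₁ T₁) (η₂ t₁) + dist (η₂ t₁) (η₂ 0) := dist_triangle _ _ _
      rw [h₂ t₁ ht₁ 0 h0₂] at this
      rw [abs_of_nonneg (by linarith [ht₁.1])] at this
      linarith [ht₁.1]
end

section
/- Let (X,d) be a metric space, r ≥ 0, and let η₁ : [0,T₁] → X and η₂ : [0,T₂] → X be unit-speed geodesics such that the Hausdorff distance between their images is at most r, d(η₁(0), η₂(0)) ≤ 5r, and |T₁ − T₂| ≤ 2r. Then for every l ∈ [0, min(T₁,T₂)] one has d(η₁(l), η₂(l)) ≤ 9r. -/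
/-!
A point `η₂ s` of the second geodesic within `r` of `η₁ l` has `|l - s| ≤ r + 5r`, because `l` and
`s` are the distances of these points to the starting points `η₁ 0` and `η₂ 0`, which are `5r`
apart. Moving from `η₂ s` to `η₂ l` along the second geodesic then gives
`d(η₁ l, η₂ l) ≤ r + 6r = 7r`.
-/

open Set Metric

section

variable {X : Type*} [PseudoMetricSpace X]

lemma isCompact_image_of_dist_eq {η : ℝ → X} {S : Set ℝ} (hS : IsCompact S)
    (h : ∀ s ∈ S, ∀ t ∈ S, dist (η s) (η t) = |s - t|) : IsCompact (η '' S) :=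
  hS.image_of_continuousOn <| LipschitzOnWith.continuousOn (K := 1) <|
    LipschitzOnWith.mk_one fun s hs t ht => (h s hs t ht).trans_le (Real.dist_eq s t).ge

lemma exists_dist_le_hausdorffDist {A B : Set X} (hA : Bornology.IsBounded A) (hB : IsCompact B)
    (hB₀ : B.Nonempty) {x : X} (hx : x ∈ A) : ∃ y ∈ B, dist x y ≤ hausdorffDist A B := by
  obtain ⟨y, hy, hxy⟩ := hB.exists_infDist_eq_dist hB₀ x
  refine ⟨y, hy, hxy ▸ infDist_le_hausdorffDist_of_mem hx ?_⟩
  exact hausdorffEDist_ne_top_of_nonempty_of_bounded ⟨x, hx⟩ hB₀ hA hB.isBounded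

lemma dist_le_two_mul_dist_add_dist_zero {η₁ η₂ : ℝ → X} {T₁ T₂ l s : ℝ}
    (h₁ : ∀ s ∈ Icc (0:ℝ) T₁, ∀ t ∈ Icc (0:ℝ) T₁, dist (η₁ s) (η₁ t) = |s - t|)
    (h₂ : ∀ s ∈ Icc (0:ℝ) T₂, ∀ t ∈ Icc (0:ℝ) T₂, dist (η₂ s) (η₂ t) = |s - t|)
    (hl₁ : l ∈ Icc 0 T₁) (hl₂ : l ∈ Icc 0 T₂) (hs : s ∈ Icc 0 T₂) :
    dist (η₁ l) (η₂ l) ≤ 2 * dist (η₁ l) (η₂ s) + dist (η₁ 0) (η₂ 0) := by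
  have h0₁ : (0:ℝ) ∈ Icc 0 T₁ := ⟨le_rfl, hl₁.1.trans hl₁.2⟩
  have h0₂ : (0:ℝ) ∈ Icc 0 T₂ := ⟨le_rfl, hs.1.trans hs.2⟩
  have hls : |l - s| ≤ dist (η₁ l) (η₂ s) + dist (η₁ 0) (η₂ 0) := by
    have := dist_dist_dist_le (η₁ l) (η₁ 0) (η₂ s) (η₂ 0)
    rwa [h₁ l hl₁ 0 h0₁, h₂ s hs 0 h0₂, sub_zero, sub_zero, abs_of_nonneg hl₁.1,
      abs_of_nonneg hs.1, Real.dist_eq] at this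
  calc dist (η₁ l) (η₂ l)
      ≤ dist (η₁ l) (η₂ s) + dist (η₂ s) (η₂ l) := dist_triangle _ _ _
    _ = dist (η₁ l) (η₂ s) + |l - s| := by rw [h₂ s hs l hl₂, abs_sub_comm]
    _ ≤ 2 * dist (η₁ l) (η₂ s) + dist (η₁ 0) (η₂ 0) := by linarith

end

theorem geodesics_pointwise_close_general {X : Type*} [MetricSpace X]
    (r T₁ T₂ : ℝ) (η₁ η₂ : ℝ → X)
    (h₁ : ∀ s ∈ Icc (0:ℝ) T₁, ∀ t ∈ Icc (0:ℝ) T₁, dist (η₁ s) (η₁ t) = |s - t|)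
    (h₂ : ∀ s ∈ Icc (0:ℝ) T₂, ∀ t ∈ Icc (0:ℝ) T₂, dist (η₂ s) (η₂ t) = |s - t|)
    (hH : hausdorffDist (η₁ '' Icc 0 T₁) (η₂ '' Icc 0 T₂) ≤ r)
    (h0 : dist (η₁ 0) (η₂ 0) ≤ 5 * r) :
    ∀ l ∈ Icc (0:ℝ) (min T₁ T₂), dist (η₁ l) (η₂ l) ≤ 9 * r := by
  intro l hl
  have hl₁ : l ∈ Icc 0 T₁ := ⟨hl.1, hl.2.trans (min_le_left _ _)⟩
  have hl₂ : l ∈ Icc 0 T₂ := ⟨hl.1, hl.2.trans (min_le_right _ _)⟩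
  obtain ⟨_, ⟨s, hs, rfl⟩, hls⟩ := exists_dist_le_hausdorffDist
    (isCompact_image_of_dist_eq isCompact_Icc h₁).isBounded
    (isCompact_image_of_dist_eq isCompact_Icc h₂) ⟨η₂ l, mem_image_of_mem η₂ hl₂⟩
    (mem_image_of_mem η₁ hl₁)
  have hclose := dist_le_two_mul_dist_add_dist_zero h₁ h₂ hl₁ hl₂ hs
  linarith [dist_nonneg (x := η₁ l) (y := η₂ s)]

/-- If two unit-speed geodesics have images within Hausdorff distance `r`, starting points
within `5r`, and lengths within `2r`, then they are pointwise within `9r` of each other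
on the common part of their time intervals. -/
theorem geodesics_pointwise_close {X : Type*} [MetricSpace X]
    (r T₁ T₂ : ℝ) (hr : 0 ≤ r) (hT₁ : 0 ≤ T₁) (hT₂ : 0 ≤ T₂) (η₁ η₂ : ℝ → X)
    (h₁ : ∀ s ∈ Icc (0:ℝ) T₁, ∀ t ∈ Icc (0:ℝ) T₁, dist (η₁ s) (η₁ t) = |s - t|)
    (h₂ : ∀ s ∈ Icc (0:ℝ) T₂, ∀ t ∈ Icc (0:ℝ) T₂, dist (η₂ s) (η₂ t) = |s - t|)
    (hH : hausdorffDist (η₁ '' Icc 0 T₁) (η₂ '' Icc 0 T₂) ≤ r)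
    (h0 : dist (η₁ 0) (η₂ 0) ≤ 5 * r)
    (hT : |T₁ - T₂| ≤ 2 * r) :
    ∀ l ∈ Icc (0:ℝ) (min T₁ T₂), dist (η₁ l) (η₂ l) ≤ 9 * r :=
  geodesics_pointwise_close_general r T₁ T₂ η₁ η₂ h₁ h₂ hH h0
end

section
/- Let (X,d) be a metric space and let P_n : [0,T_n] → X (n ∈ ℕ) and P : [0,T] → X be unit-speed geodesics such that the Hausdorff distance between the images of P_n and P tends to 0 and d(P_n(0), P(0)) → 0. Fix 0 ≤ s < t ≤ T. Then the Hausdorff distance between the images P_n([s, min(t, T_n)]) and P([s,t]) tends to 0 as n → ∞. -/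
/-!
Matching `P_n(l)` with a point `P(l')` at distance at most the Hausdorff distance `H_n`, the
distances of both points to the (nearby) starting points force `|l - l'| ≤ H_n + d_n`, where
`d_n = d(P_n(0), P(0))`; hence `d(P_n(l), P(l)) ≤ 2 H_n + d_n` on the common domain. The same
comparison applied to the endpoint `P(T)` gives `T ≤ T_n + H_n + d_n`, so `P_n` is defined on
`[s, t]` up to a piece of length `H_n + d_n`, and the restricted images are
`(3 H_n + 2 d_n)`-close.
-/

open Set Metric Filter

section Geodesic

variable {X : Type*} [PseudoMetricSpace X]

def IsUnitSpeedGeodesicOn (γ : ℝ → X) (S : Set ℝ) : Prop :=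
  ∀ s ∈ S, ∀ t ∈ S, dist (γ s) (γ t) = |s - t|

theorem exists_dist_le_hausdorffDist_of_isCompact {s t : Set X} {x : X} (hx : x ∈ s)
    (hs : Bornology.IsBounded s) (ht : IsCompact t) (ht' : t.Nonempty) :
    ∃ y ∈ t, dist x y ≤ hausdorffDist s t := by
  obtain ⟨y, hy, hxy⟩ := ht.exists_infDist_eq_dist ht' x
  refine ⟨y, hy, hxy ▸ infDist_le_hausdorffDist_of_mem hx ?_⟩
  exact hausdorffEDist_ne_top_of_nonempty_of_bounded ⟨x, hx⟩ ht' hs ht.isBounded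

namespace IsUnitSpeedGeodesicOn

variable {γ σ : ℝ → X} {a b : ℝ}

theorem lipschitzOnWith {S : Set ℝ} (hγ : IsUnitSpeedGeodesicOn γ S) : LipschitzOnWith 1 γ S :=
  LipschitzOnWith.mk_one fun s hs t ht => (hγ s hs t ht).trans_le (Real.dist_eq s t).ge

theorem isCompact_image_Icc (hγ : IsUnitSpeedGeodesicOn γ (Icc a b)) :
    IsCompact (γ '' Icc a b) :=
  isCompact_Icc.image_of_continuousOn hγ.lipschitzOnWith.continuousOn

theorem dist_zero {l : ℝ} (hγ : IsUnitSpeedGeodesicOn γ (Icc 0 a)) (hl : l ∈ Icc 0 a) :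
    dist (γ l) (γ 0) = l := by
  rw [hγ l hl 0 ⟨le_rfl, hl.1.trans hl.2⟩, sub_zero, abs_of_nonneg hl.1]

theorem abs_sub_le (hγ : IsUnitSpeedGeodesicOn γ (Icc 0 a)) (hσ : IsUnitSpeedGeodesicOn σ (Icc 0 b))
    {l l' : ℝ} (hl : l ∈ Icc 0 a) (hl' : l' ∈ Icc 0 b) :
    |l - l'| ≤ dist (γ l) (σ l') + dist (γ 0) (σ 0) := by
  have h := dist_dist_dist_le (γ l) (γ 0) (σ l') (σ 0)
  rwa [hγ.dist_zero hl, hσ.dist_zero hl', Real.dist_eq] at h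

section Hausdorff

variable (hγ : IsUnitSpeedGeodesicOn γ (Icc 0 a)) (hσ : IsUnitSpeedGeodesicOn σ (Icc 0 b))
include hγ hσ

theorem le_add_hausdorffDist_add_dist_zero (ha : 0 ≤ a) (hb : 0 ≤ b) :
    b ≤ a + hausdorffDist (γ '' Icc 0 a) (σ '' Icc 0 b) + dist (γ 0) (σ 0) := by
  have hbb : b ∈ Icc 0 b := ⟨hb, le_rfl⟩
  obtain ⟨_, ⟨l, hl, rfl⟩, hdist⟩ := exists_dist_le_hausdorffDist_of_isCompact
    (mem_image_of_mem σ hbb) hσ.isCompact_image_Icc.isBounded hγ.isCompact_image_Icc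
    ⟨γ 0, mem_image_of_mem γ ⟨le_rfl, ha⟩⟩
  have hlb := hσ.abs_sub_le hγ hbb hl
  rw [hausdorffDist_comm] at hdist
  rw [dist_comm (σ 0)] at hlb
  linarith [le_abs_self (b - l), hl.2]

theorem dist_le_two_mul_hausdorffDist_add_dist_zero {l : ℝ} (hl : l ∈ Icc 0 a) (hlb : l ≤ b) :
    dist (γ l) (σ l) ≤
      2 * hausdorffDist (γ '' Icc 0 a) (σ '' Icc 0 b) + dist (γ 0) (σ 0) := by
  obtain ⟨_, ⟨l', hl', rfl⟩, hdist⟩ := exists_dist_le_hausdorffDist_of_isCompact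
    (mem_image_of_mem γ hl) hγ.isCompact_image_Icc.isBounded hσ.isCompact_image_Icc
    ⟨σ 0, mem_image_of_mem σ ⟨le_rfl, hl.1.trans hlb⟩⟩
  have hll' := hγ.abs_sub_le hσ hl hl'
  calc dist (γ l) (σ l) ≤ dist (γ l) (σ l') + dist (σ l') (σ l) := dist_triangle _ _ _
    _ = dist (γ l) (σ l') + |l - l'| := by rw [hσ l' hl' l ⟨hl.1, hlb⟩, abs_sub_comm]
    _ ≤ _ := by linarith

theorem hausdorffDist_image_Icc_le {s t : ℝ} (ha : 0 ≤ a) (hs : 0 ≤ s) (htb : t ≤ b)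
    (hclose : hausdorffDist (γ '' Icc 0 a) (σ '' Icc 0 b) + dist (γ 0) (σ 0) ≤ t - s) :
    hausdorffDist (γ '' Icc s (min t a)) (σ '' Icc s t) ≤
      3 * hausdorffDist (γ '' Icc 0 a) (σ '' Icc 0 b) + 2 * dist (γ 0) (σ 0) := by
  set H := hausdorffDist (γ '' Icc 0 a) (σ '' Icc 0 b)
  set d := dist (γ 0) (σ 0)
  have hH : 0 ≤ H := hausdorffDist_nonneg
  have hd : 0 ≤ d := dist_nonneg
  have hba := hγ.le_add_hausdorffDist_add_dist_zero hσ ha (by linarith)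
  have hpoint : ∀ l, s ≤ l → l ≤ a → l ≤ b → dist (γ l) (σ l) ≤ 2 * H + d :=
    fun l hsl hla hlb => hγ.dist_le_two_mul_hausdorffDist_add_dist_zero hσ ⟨hs.trans hsl, hla⟩ hlb
  refine hausdorffDist_le_of_mem_dist (by positivity) ?_ ?_
  · rintro _ ⟨l, ⟨hsl, hlt⟩, rfl⟩
    refine ⟨σ l, mem_image_of_mem σ ⟨hsl, hlt.trans (min_le_left _ _)⟩, ?_⟩
    linarith [hpoint l hsl (hlt.trans (min_le_right _ _)) (hlt.trans ((min_le_left _ _).trans htb))]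
  · rintro _ ⟨l, ⟨hsl, hlt⟩, rfl⟩
    have hsa : s ≤ a := by linarith
    refine ⟨γ (min l a), mem_image_of_mem γ ⟨le_min hsl hsa, min_le_min_right a hlt⟩, ?_⟩
    have hshift : |l - min l a| ≤ H + d := by
      rw [abs_of_nonneg (sub_nonneg.2 (min_le_left l a))]
      rcases le_total l a with hla | hla
      · rw [min_eq_left hla]; linarith
      · rw [min_eq_right hla]; linarith
    have hmin := hpoint (min l a) (le_min hsl hsa) (min_le_right _ _)
      ((min_le_left _ _).trans (hlt.trans htb))
    calc dist (σ l) (γ (min l a)) ≤ dist (σ l) (σ (min l a)) + dist (σ (min l a)) (γ (min l a)) :=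
          dist_triangle _ _ _
      _ = |l - min l a| + dist (γ (min l a)) (σ (min l a)) := by
          rw [hσ l ⟨hs.trans hsl, hlt.trans htb⟩ (min l a)
            ⟨hs.trans (le_min hsl hsa), (min_le_left _ _).trans (hlt.trans htb)⟩, dist_comm]
      _ ≤ 3 * H + 2 * d := by linarith

end Hausdorff

end IsUnitSpeedGeodesicOn

end Geodesic

theorem restrictions_converge_in_hausdorff_general {X : Type*} [MetricSpace X]
    (Tn : ℕ → ℝ) (hTn : ∀ n, 0 ≤ Tn n) (T : ℝ)
    (Pn : ℕ → ℝ → X) (P : ℝ → X)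
    (hPn : ∀ n, ∀ s ∈ Icc (0:ℝ) (Tn n), ∀ t ∈ Icc (0:ℝ) (Tn n),
      dist (Pn n s) (Pn n t) = |s - t|)
    (hP : ∀ s ∈ Icc (0:ℝ) T, ∀ t ∈ Icc (0:ℝ) T, dist (P s) (P t) = |s - t|)
    (hH : Tendsto (fun n => hausdorffDist (Pn n '' Icc 0 (Tn n)) (P '' Icc 0 T))
      atTop (nhds 0))
    (h0 : Tendsto (fun n => dist (Pn n 0) (P 0)) atTop (nhds 0))
    (s t : ℝ) (hs : 0 ≤ s) (hst : s < t) (htT : t ≤ T) :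
    Tendsto (fun n => hausdorffDist (Pn n '' Icc s (min t (Tn n))) (P '' Icc s t))
      atTop (nhds 0) := by
  have hclose : ∀ᶠ n in atTop,
      hausdorffDist (Pn n '' Icc 0 (Tn n)) (P '' Icc 0 T) + dist (Pn n 0) (P 0) ≤ t - s :=
    (hH.add h0).eventually_le_const (by rwa [add_zero, sub_pos])
  have hbound := (hH.const_mul 3).add (h0.const_mul 2)
  rw [mul_zero, mul_zero, add_zero] at hbound
  refine squeeze_zero' (.of_forall fun _ => hausdorffDist_nonneg) ?_ hbound
  exact hclose.mono fun n hn =>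
    IsUnitSpeedGeodesicOn.hausdorffDist_image_Icc_le (hPn n) hP (hTn n) hs htT hn

/-- If unit-speed geodesics `P_n` converge to a unit-speed geodesic `P` in Hausdorff
distance with starting points converging, then the restrictions to `[s,t]` (suitably
truncated) also converge in Hausdorff distance. -/
theorem restrictions_converge_in_hausdorff {X : Type*} [MetricSpace X]
    (Tn : ℕ → ℝ) (hTn : ∀ n, 0 ≤ Tn n) (T : ℝ) (hT : 0 ≤ T)
    (Pn : ℕ → ℝ → X) (P : ℝ → X)
    (hPn : ∀ n, ∀ s ∈ Icc (0:ℝ) (Tn n), ∀ t ∈ Icc (0:ℝ) (Tn n),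
      dist (Pn n s) (Pn n t) = |s - t|)
    (hP : ∀ s ∈ Icc (0:ℝ) T, ∀ t ∈ Icc (0:ℝ) T, dist (P s) (P t) = |s - t|)
    (hH : Tendsto (fun n => hausdorffDist (Pn n '' Icc 0 (Tn n)) (P '' Icc 0 T))
      atTop (nhds 0))
    (h0 : Tendsto (fun n => dist (Pn n 0) (P 0)) atTop (nhds 0))
    (s t : ℝ) (hs : 0 ≤ s) (hst : s < t) (htT : t ≤ T) :
    Tendsto (fun n => hausdorffDist (Pn n '' Icc s (min t (Tn n))) (P '' Icc s t))
      atTop (nhds 0) :=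
  restrictions_converge_in_hausdorff_general Tn hTn T Pn P hPn hP hH h0 s t hs hst htT
end
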